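/- arXiv:2012.14453 — 3 statements merged into one kernel-verified Lean document; each statement's English description precedes it below -/
import Mathlib

section
/- Consider nested node sets N_m ⊆ N_n of sizes m ≤ n with empirical risks L_m, L_n and optimizers w*_m = argmin L_m, w*_n = argmin L_n. Suppose (i) ‖∇L_m(w_m)‖² ≤ 2μ V_{ms} where each L_i (hence L_m) is μ-strongly convex, and (ii) for every w, |L_n(w) - L_m(w)| ≤ ((n-m)/n)(V_{(n-m)s} + V_{ms}). Then L_n(w_m) - L_n(w*_n) ≤ (2(n-m)/n)(V_{(n-m)s} + V_{ms}) + V_{ms}. -/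
/-!
Compare `L_n` with `L_m` at `w_m` and at `w*_n`, each comparison costing the uniform bound `ε`;
in between, `L_m(w*_m) ≤ L_m(w*_n)`, and the Polyak–Łojasiewicz inequality for the `μ`-strongly
convex `L_m` gives `L_m(w_m) - L_m(w*_m) ≤ ‖∇L_m(w_m)‖² / (2μ) ≤ V_{ms}`.
-/

open Set
open scoped RealInnerProductSpace

theorem ConvexOn.add_le_of_hasFDerivAt {E : Type*} [NormedAddCommGroup E] [NormedSpace ℝ E]
    {s : Set E} {f : E → ℝ} {f' : E →L[ℝ] ℝ} {x y : E} (hf : ConvexOn ℝ s f)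
    (hx : x ∈ s) (hy : y ∈ s) (hfx : HasFDerivAt f f' x) :
    f x + f' (y - x) ≤ f y := by
  set L : ℝ →ᵃ[ℝ] E := AffineMap.lineMap x y
  have hφ : ConvexOn ℝ (L ⁻¹' s) (f ∘ L) := hf.comp_affineMap L
  have hφ' : HasDerivAt (f ∘ L) (f' (y - x)) 0 := by
    refine HasFDerivAt.comp_hasDerivAt (0 : ℝ) ?_ AffineMap.hasDerivAt_lineMap
    simpa [L] using hfx
  have hslope := hφ.le_slope_of_hasDerivAt (by simpa [L] using hx) (by simpa [L] using hy) one_pos hφ'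
  rwa [slope_def_field, sub_zero, div_one, Function.comp_apply, Function.comp_apply,
    AffineMap.lineMap_apply_one, AffineMap.lineMap_apply_zero, le_sub_iff_add_le'] at hslope

theorem StrongConvexOn.add_le_of_hasGradientAt {E : Type*} [NormedAddCommGroup E]
    [InnerProductSpace ℝ E] [CompleteSpace E] {s : Set E} {f : E → ℝ} {μ : ℝ} {f' x y : E}
    (hf : StrongConvexOn s μ f) (hx : x ∈ s) (hy : y ∈ s) (hfx : HasGradientAt f f' x) :
    f x + ⟪f', y - x⟫ + μ / 2 * ‖y - x‖ ^ 2 ≤ f y := by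
  have hg : HasFDerivAt (fun z ↦ f z - μ / 2 * ‖z‖ ^ 2)
      (InnerProductSpace.toDual ℝ E f' - (μ / 2) • (2 • innerSL ℝ x)) x :=
    hfx.hasFDerivAt.sub ((hasStrictFDerivAt_norm_sq x).hasFDerivAt.const_smul (μ / 2))
  have hlower := (strongConvexOn_iff_convex.mp hf).add_le_of_hasFDerivAt hx hy hg
  simp only [sub_apply, InnerProductSpace.toDual_apply_apply, smul_apply, coe_innerSL_apply,
    nsmul_eq_mul, Nat.cast_ofNat, smul_eq_mul, inner_sub_right, real_inner_self_eq_norm_sq] at hlower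
  rw [norm_sub_sq_real, inner_sub_right, real_inner_comm x y]
  linarith

/-- The Polyak–Łojasiewicz inequality. -/
theorem StrongConvexOn.sub_le_of_hasGradientAt {E : Type*} [NormedAddCommGroup E]
    [InnerProductSpace ℝ E] [CompleteSpace E] {s : Set E} {f : E → ℝ} {μ : ℝ} {f' x y : E}
    (hf : StrongConvexOn s μ f) (hμ : 0 < μ) (hx : x ∈ s) (hy : y ∈ s)
    (hfx : HasGradientAt f f' x) :
    f x - f y ≤ ‖f'‖ ^ 2 / (2 * μ) := by
  have hlower := hf.add_le_of_hasGradientAt hx hy hfx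
  -- minimize the quadratic lower bound in `y - x`: the minimum is attained at `-f' / μ`
  have hsq : 0 ≤ ‖f' + μ • (y - x)‖ ^ 2 := sq_nonneg _
  rw [norm_add_sq_real, inner_smul_right, norm_smul, Real.norm_of_nonneg hμ.le, mul_pow] at hsq
  rw [le_div_iff₀ (by positivity)]
  nlinarith [mul_le_mul_of_nonneg_left hlower (by positivity : (0 : ℝ) ≤ 2 * μ)]

theorem stmt_2_general {E : Type*} [NormedAddCommGroup E] [InnerProductSpace ℝ E] [CompleteSpace E]
    (m n : ℕ)
    (μ V1 V2 : ℝ) (hμ : 0 < μ)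
    (Lm Ln : E → ℝ)
    (hconv : StrongConvexOn Set.univ μ Lm) (hdiff : Differentiable ℝ Lm)
    (wm wsm wsn : E) (hminm : ∀ y, Lm wsm ≤ Lm y)
    (hgrad : ‖gradient Lm wm‖ ^ 2 ≤ 2 * μ * V2)
    (hunif : ∀ w, |Ln w - Lm w| ≤ (((n : ℝ) - m) / n) * (V1 + V2)) :
    Ln wm - Ln wsn ≤ 2 * ((n : ℝ) - m) / n * (V1 + V2) + V2 := by
  have hoptim : Lm wm - Lm wsm ≤ V2 :=
    calc Lm wm - Lm wsm ≤ ‖gradient Lm wm‖ ^ 2 / (2 * μ) :=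
          hconv.sub_le_of_hasGradientAt hμ (mem_univ _) (mem_univ _) (hdiff wm).hasGradientAt
      _ ≤ V2 := by rwa [div_le_iff₀' (by positivity)]
  have hwm := (abs_le.mp (hunif wm)).2
  have hwsn := (abs_le.mp (hunif wsn)).1
  linear_combination hwm + hwsn + hoptim + hminm wsn

/-- For nested node sets `Nm ⊆ Nn` with empirical risks `L_m, L_n` and
optimizers `w*_m, w*_n`, if `‖∇L_m(w_m)‖² ≤ 2μV_{ms}` with `L_m` `μ`-strongly convex, and
`|L_n(w) - L_m(w)| ≤ ((n-m)/n)(V_{(n-m)s} + V_{ms})` for all `w`, then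
`L_n(w_m) - L_n(w*_n) ≤ (2(n-m)/n)(V_{(n-m)s} + V_{ms}) + V_{ms}`. -/
theorem stmt_2 {ι E : Type*} [NormedAddCommGroup E] [InnerProductSpace ℝ E] [CompleteSpace E]
    (Nm Nn : Finset ι) (hsub : Nm ⊆ Nn)
    (m n : ℕ) (hmcard : Nm.card = m) (hncard : Nn.card = n) (hm : 0 < m) (hmn : m ≤ n)
    (Lloc : ι → E → ℝ) (μ V1 V2 : ℝ) (hμ : 0 < μ) (hV1 : 0 ≤ V1) (hV2 : 0 ≤ V2)
    (Lm Ln : E → ℝ)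
    (hLm : Lm = fun w => (1 / (m : ℝ)) * ∑ i ∈ Nm, Lloc i w)
    (hLn : Ln = fun w => (1 / (n : ℝ)) * ∑ i ∈ Nn, Lloc i w)
    (hconv : StrongConvexOn Set.univ μ Lm) (hdiff : Differentiable ℝ Lm)
    (wm wsm wsn : E) (hminm : ∀ y, Lm wsm ≤ Lm y) (hminn : ∀ y, Ln wsn ≤ Ln y)
    (hgrad : ‖gradient Lm wm‖ ^ 2 ≤ 2 * μ * V2)
    (hunif : ∀ w, |Ln w - Lm w| ≤ (((n : ℝ) - m) / n) * (V1 + V2)) :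
    Ln wm - Ln wsn ≤ 2 * ((n : ℝ) - m) / n * (V1 + V2) + V2 :=
  stmt_2_general m n μ V1 V2 hμ Lm Ln hconv hdiff wm wsm wsn hminm hgrad hunif
end

section
/- With the setting of nested node sets N_m ⊆ N_n, if ‖∇L_m(w_m)‖² ≤ 2μ V_{ms} and the gradient approximation errors satisfy ‖(1/(n-m)) Σ_{i∈N_n\N_m} ∇L^i(w) - ∇L(w)‖ ≤ V_{(n-m)s}^{1/2} and ‖∇L_m(w) - ∇L(w)‖ ≤ V_{ms}^{1/2} for all w, then ‖∇L_n(w_m)‖² ≤ 2((n-m)/n)²(V_{(n-m)s}^{1/2} + V_{ms}^{1/2})² + 4μ V_{ms}. -/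
/-!
Write `Gₘ = ∇Lₘ(wₘ)`, `Gₙ = ∇Lₙ(wₘ)` and `g` for the average gradient over `Nₙ \ Nₘ`. Splitting the
sum over `Nₙ` along `Nₘ` gives `Gₙ - Gₘ = ((n-m)/n) (g - Gₘ)`, and the triangle inequality through
`∇L(wₘ)` bounds `‖g - Gₘ‖` by `√V₁ + √V₂`. The claim follows from `‖Gₙ‖² ≤ 2‖Gₙ - Gₘ‖² + 2‖Gₘ‖²`.
-/

open Finset

theorem gradient_const_mul_sum {ι E : Type*} [NormedAddCommGroup E] [InnerProductSpace ℝ E]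
    [CompleteSpace E] {s : Finset ι} {f : ι → E → ℝ} {x : E}
    (hf : ∀ i ∈ s, DifferentiableAt ℝ (f i) x) (c : ℝ) :
    gradient (fun w => c * ∑ i ∈ s, f i w) x = c • ∑ i ∈ s, gradient (f i) x := by
  unfold gradient
  rw [fderiv_const_mul (DifferentiableAt.fun_sum hf), fderiv_fun_sum hf, map_smul, map_sum]

theorem smul_add_sub_smul_eq_smul_sub {𝕜 E : Type*} [Field 𝕜] [AddCommGroup E] [Module 𝕜 E]
    {m n : 𝕜} (hm : m ≠ 0) (hn : n ≠ 0) (hmn : n - m ≠ 0) (a b : E) :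
    (1 / n) • (b + a) - (1 / m) • a = ((n - m) / n) • ((1 / (n - m)) • b - (1 / m) • a) := by
  match_scalars <;> field_simp
  ring

theorem norm_sq_le_two_mul_norm_sub_sq_add {E : Type*} [SeminormedAddCommGroup E] (a b : E) :
    ‖a‖ ^ 2 ≤ 2 * ‖a - b‖ ^ 2 + 2 * ‖b‖ ^ 2 := by
  calc ‖a‖ ^ 2 ≤ (‖a - b‖ + ‖b‖) ^ 2 := by
        gcongr
        simpa using norm_add_le (a - b) b
    _ ≤ 2 * ‖a - b‖ ^ 2 + 2 * ‖b‖ ^ 2 := by linarith [add_sq_le (a := ‖a - b‖) (b := ‖b‖)]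

theorem stmt_3_general {ι E : Type*} [DecidableEq ι]
    [NormedAddCommGroup E] [InnerProductSpace ℝ E] [CompleteSpace E]
    (Nm Nn : Finset ι) (hsub : Nm ⊆ Nn)
    (m n : ℕ) (hm : 0 < m) (hmn : m < n)
    (Lloc : ι → E → ℝ) (L : E → ℝ) (μ V1 V2 : ℝ)
    (hdiff : ∀ i, Differentiable ℝ (Lloc i))
    (Lm Ln : E → ℝ)
    (hLm : Lm = fun w => (1 / (m : ℝ)) * ∑ i ∈ Nm, Lloc i w)
    (hLn : Ln = fun w => (1 / (n : ℝ)) * ∑ i ∈ Nn, Lloc i w)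
    (wm : E)
    (hgrad : ‖gradient Lm wm‖ ^ 2 ≤ 2 * μ * V2)
    (hg1 : ∀ w, ‖(1 / ((n : ℝ) - m)) • ∑ i ∈ Nn \ Nm, gradient (Lloc i) w - gradient L w‖
      ≤ Real.sqrt V1)
    (hg2 : ∀ w, ‖gradient Lm w - gradient L w‖ ≤ Real.sqrt V2) :
    ‖gradient Ln wm‖ ^ 2
      ≤ 2 * (((n : ℝ) - m) / n) ^ 2 * (Real.sqrt V1 + Real.sqrt V2) ^ 2 + 4 * μ * V2 := by
  have hmn' : (m : ℝ) < n := by exact_mod_cast hmn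
  have hm' : (0 : ℝ) < m := by exact_mod_cast hm
  set g := (1 / ((n : ℝ) - m)) • ∑ i ∈ Nn \ Nm, gradient (Lloc i) wm
  have hGm : gradient Lm wm = (1 / (m : ℝ)) • ∑ i ∈ Nm, gradient (Lloc i) wm := by
    rw [hLm, gradient_const_mul_sum fun i _ => (hdiff i).differentiableAt]
  have hsplit : gradient Ln wm - gradient Lm wm = (((n : ℝ) - m) / n) • (g - gradient Lm wm) := by
    rw [hLn, gradient_const_mul_sum fun i _ => (hdiff i).differentiableAt, ← sum_sdiff hsub, hGm]
    exact smul_add_sub_smul_eq_smul_sub hm'.ne' (by linarith) (by linarith) _ _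
  have hgap : ‖g - gradient Lm wm‖ ≤ Real.sqrt V1 + Real.sqrt V2 :=
    (norm_sub_le_norm_sub_add_norm_sub _ (gradient L wm) _).trans
      (add_le_add (hg1 wm) (norm_sub_rev (gradient Lm wm) _ ▸ hg2 wm))
  have hdist : ‖gradient Ln wm - gradient Lm wm‖ ≤
      ((n : ℝ) - m) / n * (Real.sqrt V1 + Real.sqrt V2) := by
    rw [hsplit, norm_smul, Real.norm_of_nonneg (div_nonneg (by linarith) (by linarith))]
    gcongr
  calc ‖gradient Ln wm‖ ^ 2
      ≤ 2 * ‖gradient Ln wm - gradient Lm wm‖ ^ 2 + 2 * ‖gradient Lm wm‖ ^ 2 :=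
        norm_sq_le_two_mul_norm_sub_sq_add _ _
    _ ≤ 2 * (((n : ℝ) - m) / n * (Real.sqrt V1 + Real.sqrt V2)) ^ 2 + 2 * (2 * μ * V2) := by
        gcongr
    _ = _ := by ring

/-- With nested node sets `Nm ⊆ Nn`, if `‖∇L_m(w_m)‖² ≤ 2μV_{ms}` and the
gradient approximation errors over `Nn \ Nm` (with `(n-m)s` samples) and over `Nm` (with
`ms` samples) are bounded by `√V_{(n-m)s}` and `√V_{ms}` respectively, then
`‖∇L_n(w_m)‖² ≤ 2((n-m)/n)²(√V_{(n-m)s} + √V_{ms})² + 4μV_{ms}`. -/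
theorem stmt_3 {ι E : Type*} [DecidableEq ι]
    [NormedAddCommGroup E] [InnerProductSpace ℝ E] [CompleteSpace E]
    (Nm Nn : Finset ι) (hsub : Nm ⊆ Nn)
    (m n : ℕ) (hmcard : Nm.card = m) (hncard : Nn.card = n) (hm : 0 < m) (hmn : m < n)
    (Lloc : ι → E → ℝ) (L : E → ℝ) (μ V1 V2 : ℝ) (hμ : 0 < μ) (hV1 : 0 ≤ V1) (hV2 : 0 ≤ V2)
    (hdiff : ∀ i, Differentiable ℝ (Lloc i)) (hdiffL : Differentiable ℝ L)
    (Lm Ln : E → ℝ)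
    (hLm : Lm = fun w => (1 / (m : ℝ)) * ∑ i ∈ Nm, Lloc i w)
    (hLn : Ln = fun w => (1 / (n : ℝ)) * ∑ i ∈ Nn, Lloc i w)
    (wm : E)
    (hgrad : ‖gradient Lm wm‖ ^ 2 ≤ 2 * μ * V2)
    (hg1 : ∀ w, ‖(1 / ((n : ℝ) - m)) • ∑ i ∈ Nn \ Nm, gradient (Lloc i) w - gradient L w‖
      ≤ Real.sqrt V1)
    (hg2 : ∀ w, ‖gradient Lm w - gradient L w‖ ≤ Real.sqrt V2) :
    ‖gradient Ln wm‖ ^ 2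
      ≤ 2 * (((n : ℝ) - m) / n) ^ 2 * (Real.sqrt V1 + Real.sqrt V2) ^ 2 + 4 * μ * V2 :=
  stmt_3_general Nm Nn hsub m n hm hmn Lloc L μ V1 V2 hdiff Lm Ln hLm hLn wm hgrad hg1 hg2
end

section
/- Let N = 2^K with K ≥ 1 and define a_j = H_N - H_{N - 2^j} for j = 0, 1, …, K-1 and a_K = H_N, where H_n is the n-th harmonic number (H_0 = 0). Then (a_0 + a_1 + ⋯ + a_K) / a_K ≤ 2 + 1/N. -/
/-!
Each gap satisfies `H_N - H_{N - 2^j} ≤ 2^j / (N - 2^j + 1) ≤ 2^{j+1} / N`, so the gaps sum to at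
most `2 - 2/N`, while `H_{2^K} ≥ 1 + K/2` since each dyadic block `(2^k, 2^{k+1}]` contributes at
least `1/2`. Hence the gaps sum to at most `H_N`, so the ratio is at most `2`.
-/

open Finset

lemma harmonic_sub_harmonic_eq_sum_Ico {m n : ℕ} (h : m ≤ n) :
    harmonic n - harmonic m = ∑ i ∈ Ico m n, ((i : ℚ) + 1)⁻¹ := by
  simp only [harmonic, sum_Ico_eq_sub _ h, Nat.cast_add, Nat.cast_one]

lemma harmonic_sub_harmonic_le {m n : ℕ} (h : m ≤ n) :
    harmonic n - harmonic m ≤ ((n : ℚ) - m) / (m + 1) := by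
  rw [harmonic_sub_harmonic_eq_sum_Ico h]
  calc ∑ i ∈ Ico m n, ((i : ℚ) + 1)⁻¹ ≤ ∑ _i ∈ Ico m n, ((m : ℚ) + 1)⁻¹ := by
        refine sum_le_sum fun i hi => inv_anti₀ (by positivity) ?_
        have : m ≤ i := (mem_Ico.mp hi).1
        gcongr
    _ = ((n : ℚ) - m) / (m + 1) := by
        rw [sum_const, Nat.card_Ico, nsmul_eq_mul, Nat.cast_sub h, div_eq_mul_inv]

lemma harmonic_sub_harmonic_ge {m n : ℕ} (h : m ≤ n) :
    ((n : ℚ) - m) / n ≤ harmonic n - harmonic m := by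
  rw [harmonic_sub_harmonic_eq_sum_Ico h]
  calc ((n : ℚ) - m) / n = ∑ _i ∈ Ico m n, (n : ℚ)⁻¹ := by
        rw [sum_const, Nat.card_Ico, nsmul_eq_mul, Nat.cast_sub h, div_eq_mul_inv]
    _ ≤ ∑ i ∈ Ico m n, ((i : ℚ) + 1)⁻¹ := by
        refine sum_le_sum fun i hi => inv_anti₀ (by positivity) ?_
        exact_mod_cast (mem_Ico.mp hi).2

lemma harmonic_sub_harmonic_sub_le {m n : ℕ} (h : 2 * m ≤ n) :
    harmonic n - harmonic (n - m) ≤ 2 * m / n := by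
  obtain rfl | hn := Nat.eq_zero_or_pos n
  · obtain rfl : m = 0 := by omega
    simp
  have hmn : m ≤ n := by omega
  have hpos : (0 : ℚ) < n - m + 1 := by
    have : (m : ℚ) ≤ n := by exact_mod_cast hmn
    linarith
  have hmn' : (2 * m : ℚ) ≤ n := by exact_mod_cast h
  calc harmonic n - harmonic (n - m) ≤ m / (n - m + 1) := by
        simpa [Nat.cast_sub hmn] using harmonic_sub_harmonic_le (Nat.sub_le n m)
    _ ≤ 2 * m / n := by
        rw [div_le_div_iff₀ hpos (by exact_mod_cast hn)]
        nlinarith [m.cast_nonneg (α := ℚ)]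

lemma one_add_div_two_le_harmonic_two_pow (K : ℕ) : 1 + (K : ℚ) / 2 ≤ harmonic (2 ^ K) := by
  induction K with
  | zero => simp [harmonic]
  | succ k ih =>
    have hblock : (1 : ℚ) / 2 ≤ harmonic (2 ^ (k + 1)) - harmonic (2 ^ k) := by
      refine le_of_eq_of_le ?_ (harmonic_sub_harmonic_ge (Nat.pow_le_pow_right two_pos k.le_succ))
      push_cast
      field_simp
      ring
    push_cast at ih ⊢
    linarith

lemma two_sub_two_div_two_pow_le (K : ℕ) : 2 - 2 / (2 : ℚ) ^ K ≤ 1 + (K : ℚ) / 2 := by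
  rcases K with _ | _ | K
  · norm_num
  · norm_num
  · have : (0 : ℚ) ≤ 2 / 2 ^ (K + 1 + 1) := by positivity
    push_cast
    linarith [K.cast_nonneg (α := ℚ)]

lemma sum_harmonic_sub_harmonic_two_pow_le (K : ℕ) :
    ∑ j ∈ range K, (harmonic (2 ^ K) - harmonic (2 ^ K - 2 ^ j)) ≤ harmonic (2 ^ K) :=
  calc ∑ j ∈ range K, (harmonic (2 ^ K) - harmonic (2 ^ K - 2 ^ j))
      ≤ ∑ j ∈ range K, 2 * (2 : ℚ) ^ j / 2 ^ K := by
        refine sum_le_sum fun j hj => ?_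
        have h : 2 * 2 ^ j ≤ 2 ^ K := by
          rw [← pow_succ']
          exact Nat.pow_le_pow_right two_pos (mem_range.mp hj)
        exact_mod_cast harmonic_sub_harmonic_sub_le h
    _ = 2 - 2 / 2 ^ K := by
        rw [← sum_div, ← mul_sum, geom_sum_eq (by norm_num : (2 : ℚ) ≠ 1)]
        field_simp
        ring
    _ ≤ 1 + (K : ℚ) / 2 := two_sub_two_div_two_pow_le K
    _ ≤ harmonic (2 ^ K) := one_add_div_two_le_harmonic_two_pow K

theorem stmt_12_general (K N : ℕ) (hN : N = 2 ^ K) :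
    ((∑ j ∈ Finset.range K, ((harmonic N : ℝ) - (harmonic (N - 2 ^ j) : ℝ)))
        + (harmonic N : ℝ)) / (harmonic N : ℝ) ≤ 2 + 1 / (N : ℝ) := by
  subst hN
  have hH : (0 : ℝ) < harmonic (2 ^ K) := by
    exact_mod_cast harmonic_pos (pow_ne_zero K two_ne_zero)
  have hsum : ∑ j ∈ range K, ((harmonic (2 ^ K) : ℝ) - harmonic (2 ^ K - 2 ^ j))
      ≤ harmonic (2 ^ K) := by
    exact_mod_cast sum_harmonic_sub_harmonic_two_pow_le K
  calc _ ≤ ((harmonic (2 ^ K) : ℝ) + harmonic (2 ^ K)) / harmonic (2 ^ K) := by gcongr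
    _ = 2 := by field_simp; ring
    _ ≤ 2 + 1 / ((2 ^ K : ℕ) : ℝ) := by simp only [le_add_iff_nonneg_right]; positivity

/-- Let `N = 2^K` with `K ≥ 1` and `a_j = H_N - H_{N - 2^j}` for
`j = 0, …, K-1`, `a_K = H_N`. Then `(a_0 + ⋯ + a_K)/a_K ≤ 2 + 1/N`. -/
theorem stmt_12 (K N : ℕ) (hK : 1 ≤ K) (hN : N = 2 ^ K) :
    ((∑ j ∈ Finset.range K, ((harmonic N : ℝ) - (harmonic (N - 2 ^ j) : ℝ)))
        + (harmonic N : ℝ)) / (harmonic N : ℝ) ≤ 2 + 1 / (N : ℝ) :=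
  stmt_12_general K N hN
end
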